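/- arXiv:2510.22741 — 5 statements merged into one kernel-verified Lean document; each statement's English description precedes it below -/
import Mathlib

section
/- Let q > 2 be a real number and set α = (q−2)/q ∈ (0,1). Define u : ℝ → ℝ by u(x) = sign(x)·|x|^α. Then for every x ≠ 0, u is twice differentiable at x with u'(x) = α|x|^{α−1} > 0 and u''(x) = α(α−1)·sign(x)·|x|^{α−2}, and u satisfies the pointwise identity arctan(u''(x)) = −arctan( (1−α)·α^{1−q} · u(x) · (u'(x))^q ), where (u'(x))^q denotes the real power of the positive number u'(x). -/
/-!
Away from the origin the sign is locally constant, so `u = sign x · |·|^α` is a power of `|·|`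
up to a constant factor and is differentiated by the power rule. The identity then comes from
`(α - 1) q = -2`: it gives `α^(1-q) (u')^q = α |x|^(-2)`, hence
`(1 - α) α^(1-q) u (u')^q = -u''`, and `arctan` is odd.
-/

open Real Filter Topology

namespace Real

theorem coe_signType_sign (x : ℝ) : (SignType.sign x : ℝ) = Real.sign x := by
  rcases lt_trichotomy x 0 with hx | rfl | hx
  · simp [hx, sign_of_neg hx]
  · simp
  · simp [hx, sign_of_pos hx]

theorem sign_mul_sign_of_ne_zero {x : ℝ} (hx : x ≠ 0) : Real.sign x * Real.sign x = 1 := by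
  rcases sign_apply_eq_of_ne_zero x hx with h | h <;> rw [h] <;> norm_num

theorem sign_eventuallyEq_of_ne_zero {x : ℝ} (hx : x ≠ 0) :
    Real.sign =ᶠ[𝓝 x] fun _ ↦ Real.sign x := by
  rcases hx.lt_or_gt with hx | hx
  · filter_upwards [eventually_lt_nhds hx] with y hy
    rw [sign_of_neg hy, sign_of_neg hx]
  · filter_upwards [eventually_gt_nhds hx] with y hy
    rw [sign_of_pos hy, sign_of_pos hx]

theorem hasDerivAt_abs_rpow_of_ne_zero {x : ℝ} (p : ℝ) (hx : x ≠ 0) :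
    HasDerivAt (fun y ↦ |y| ^ p) (p * Real.sign x * |x| ^ (p - 1)) x := by
  have h := (hasDerivAt_rpow_const (p := p) (Or.inl (abs_ne_zero.2 hx))).comp x
    (hasDerivAt_abs hx)
  rw [coe_signType_sign] at h
  exact h.congr_deriv (by ring)

theorem hasDerivAt_sign_mul_abs_rpow {x : ℝ} (p : ℝ) (hx : x ≠ 0) :
    HasDerivAt (fun y ↦ Real.sign y * |y| ^ p) (p * |x| ^ (p - 1)) x := by
  have h := (hasDerivAt_abs_rpow_of_ne_zero p hx).const_mul (Real.sign x)
  refine (h.congr_of_eventuallyEq ?_).congr_deriv ?_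
  · filter_upwards [sign_eventuallyEq_of_ne_zero hx] with y hy
    rw [hy]
  · linear_combination (p * |x| ^ (p - 1)) * sign_mul_sign_of_ne_zero hx

end Real

theorem sub_two_div_mem_Ioo {q : ℝ} (hq : 2 < q) : (q - 2) / q ∈ Set.Ioo (0 : ℝ) 1 := by
  have hq0 : 0 < q := by linarith
  exact ⟨div_pos (by linarith) hq0, (div_lt_one hq0).2 (by linarith)⟩

theorem sub_one_mul_eq_neg_two {q α : ℝ} (hq : q ≠ 0) (hα : α = (q - 2) / q) :
    (α - 1) * q = -2 := by
  rw [hα]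
  field_simp
  ring

theorem one_sub_mul_rpow_mul_mul_rpow_eq {α q r : ℝ} (s : ℝ) (hα : 0 < α) (hr : 0 < r)
    (hαq : (α - 1) * q = -2) :
    (1 - α) * α ^ (1 - q) * (s * r ^ α) * (α * r ^ (α - 1)) ^ q =
      -(α * (α - 1) * s * r ^ (α - 2)) := by
  have hpow : (α * r ^ (α - 1)) ^ q = α ^ q * r ^ (-2 : ℝ) := by
    rw [mul_rpow hα.le (rpow_nonneg hr.le _), ← rpow_mul hr.le, hαq]
  have hα_pow : α ^ (1 - q) * α ^ q = α := by
    rw [← rpow_add hα, sub_add_cancel, rpow_one]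
  have hr_pow : r ^ α * r ^ (-2 : ℝ) = r ^ (α - 2) := by
    rw [← rpow_add hr, ← sub_eq_add_neg]
  rw [hpow]
  linear_combination (1 - α) * s * (α ^ (1 - q) * α ^ q * hr_pow + r ^ (α - 2) * hα_pow)

/-- the function u(x) = sign(x)·|x|^α with α = (q−2)/q, q > 2, solves
arctan(u'') = −arctan((1−α)·α^{1−q}·u·(u')^q) away from the origin. -/
theorem singular_solution_fails_monotonicity
    (q : ℝ) (hq : 2 < q) (α : ℝ) (hα : α = (q - 2) / q) :
    α ∈ Set.Ioo (0 : ℝ) 1 ∧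
    ∀ x : ℝ, x ≠ 0 →
      HasDerivAt (fun y : ℝ => Real.sign y * |y| ^ α) (α * |x| ^ (α - 1)) x ∧
      0 < α * |x| ^ (α - 1) ∧
      HasDerivAt (fun y : ℝ => α * |y| ^ (α - 1))
        (α * (α - 1) * Real.sign x * |x| ^ (α - 2)) x ∧
      Real.arctan (α * (α - 1) * Real.sign x * |x| ^ (α - 2)) =
        - Real.arctan ((1 - α) * α ^ (1 - q) * (Real.sign x * |x| ^ α) *
          (α * |x| ^ (α - 1)) ^ q) := by
  have hαIoo : α ∈ Set.Ioo (0 : ℝ) 1 := hα ▸ sub_two_div_mem_Ioo hq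
  have hαq : (α - 1) * q = -2 := sub_one_mul_eq_neg_two (by linarith) hα
  refine ⟨hαIoo, fun x hx ↦ ⟨hasDerivAt_sign_mul_abs_rpow α hx, ?_, ?_, ?_⟩⟩
  · have := abs_pos.2 hx
    have := hαIoo.1
    positivity
  · have h := (hasDerivAt_abs_rpow_of_ne_zero (α - 1) hx).const_mul α
    rw [show α - 1 - 1 = α - 2 by ring] at h
    exact h.congr_deriv (by ring)
  · rw [one_sub_mul_rpow_mul_mul_rpow_eq _ hαIoo.1 (abs_pos.2 hx) hαq, arctan_neg, neg_neg]
end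

section
/- Let n ≥ 1, let λ₁,…,λₙ ∈ ℝ, and let A ∈ ℝ. Define the n×n matrix H by H_{ij} = (A + 2λ_i δ_{ij}) / ( (1+λ_i²)(1+λ_j²) ), where δ_{ij} is the Kronecker delta. Then det H = ( A·2^{n−1}·σ_{n−1}(λ) + 2ⁿ·σₙ(λ) ) / ∏_{i=1}^n (1+λ_i²)². -/
open Real

noncomputable section

/-- The k-th elementary symmetric polynomial σ_k(λ₁,…,λₙ), with σ₀ = 1. -/
noncomputable def esymm (n k : ℕ) (lam : Fin n → ℝ) : ℝ :=
  ∑ s ∈ Finset.powersetCard k (Finset.univ : Finset (Fin n)), ∏ i ∈ s, lam i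

/-!
With `C = diagonal ((1 + λᵢ²)⁻¹)` one has `H = C (diagonal (2λ) + A 𝟙𝟙ᵀ) C`. The matrix
determinant lemma `det (D + u vᵀ) = det D + vᵀ (adj D) u`, which holds without invertibility
of `D`, gives for `D = diagonal (2λ)` the value `2ⁿ σₙ(λ) + A 2ⁿ⁻¹ σₙ₋₁(λ)` for the middle factor,
while `det C² = ∏ (1 + λᵢ²)⁻²`.
-/

open Finset Matrix

theorem Finset.sum_powersetCard_card_sub_one {α β : Type*} [DecidableEq α] [AddCommMonoid β]
    {s : Finset α} (hs : s.Nonempty) (f : Finset α → β) :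
    ∑ t ∈ s.powersetCard (#s - 1), f t = ∑ a ∈ s, f (s.erase a) := by
  have himage : s.powersetCard (#s - 1) = s.image s.erase := by
    ext t
    simp only [mem_powersetCard, mem_image]
    constructor
    · rintro ⟨hts, hcard⟩
      obtain ⟨a, hat, rfl⟩ := exists_eq_insert_iff.mpr ⟨hts, by have := hs.card_pos; omega⟩
      exact ⟨a, mem_insert_self a t, erase_insert hat⟩
    · rintro ⟨a, ha, rfl⟩
      exact ⟨erase_subset a s, card_erase_of_mem ha⟩
  rw [himage, sum_image (erase_injOn s)]

theorem esymm_self (n : ℕ) (lam : Fin n → ℝ) : esymm n n lam = ∏ i, lam i := by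
  have hpowerset : powersetCard n (univ : Finset (Fin n)) = {univ} := by
    simpa using powersetCard_self (univ : Finset (Fin n))
  rw [esymm, hpowerset, sum_singleton]

theorem esymm_sub_one {n : ℕ} (hn : 1 ≤ n) (lam : Fin n → ℝ) :
    esymm n (n - 1) lam = ∑ i, ∏ j ∈ univ.erase i, lam j := by
  have huniv : (univ : Finset (Fin n)).Nonempty := univ_nonempty_iff.mpr ⟨⟨0, hn⟩⟩
  rw [esymm]
  simpa using sum_powersetCard_card_sub_one huniv fun s => ∏ i ∈ s, lam i

namespace Matrix

variable {n R : Type*} [Fintype n] [DecidableEq n] [CommRing R]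

theorem det_updateRow_eq_adjugate_transpose_mulVec (M : Matrix n n R) (i : n) (v : n → R) :
    (M.updateRow i v).det = (adjugate Mᵀ *ᵥ v) i := by
  rw [← cramer_transpose_apply, cramer_eq_adjugate_mulVec]

theorem det_add_vecMulVec_eq_add_sum_updateRow (M : Matrix n n R) (u v : n → R) :
    (M + vecMulVec u v).det = M.det + ∑ i, u i * (M.updateRow i v).det := by
  suffices h : ∀ s : Finset n, (M + vecMulVec (∑ i ∈ s, Pi.single i (u i)) v).det =
      M.det + ∑ i ∈ s, u i * (M.updateRow i v).det by
    simpa only [univ_sum_single] using h univ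
  intro s
  induction s using Finset.induction_on with
  | empty => simp
  | insert j s hj ih =>
    set w := ∑ i ∈ s, Pi.single i (u i)
    have hwj : w j = 0 := by
      rw [show w j = ∑ i ∈ s, Pi.single i (u i) j from Finset.sum_apply j s _]
      exact sum_eq_zero fun i hi => Pi.single_eq_of_ne (ne_of_mem_of_not_mem hi hj).symm _
    have hrow : M + vecMulVec (Pi.single j (u j) + w) v =
        (M + vecMulVec w v).updateRow j (M j + u j • v) := by
      ext a b
      by_cases h : a = j <;> simp [h, hwj, vecMulVec_apply]
    -- the rows in `s` differ from those of `M` by multiples of the new row `v`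
    have hshear : ((M + vecMulVec w v).updateRow j v).det = (M.updateRow j v).det :=
      det_eq_of_forall_row_eq_smul_add_const w j hwj fun a b => by
        by_cases h : a = j <;> simp [h, hwj, vecMulVec_apply]
    have hrowj : (M + vecMulVec w v) j = M j := by
      ext b
      simp [hwj, vecMulVec_apply]
    rw [sum_insert hj, sum_insert hj, hrow, det_updateRow_add, det_updateRow_smul, ← hrowj,
      updateRow_eq_self, ih, hshear]
    ring

theorem det_add_vecMulVec (M : Matrix n n R) (u v : n → R) :
    (M + vecMulVec u v).det = M.det + v ⬝ᵥ (adjugate M *ᵥ u) := by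
  simp only [det_add_vecMulVec_eq_add_sum_updateRow, det_updateRow_eq_adjugate_transpose_mulVec,
    ← adjugate_transpose]
  change M.det + u ⬝ᵥ ((adjugate M)ᵀ *ᵥ v) = _
  rw [dotProduct_mulVec, vecMul_transpose, dotProduct_comm]

theorem det_diagonal_add_vecMulVec (d u v : n → R) :
    (diagonal d + vecMulVec u v).det = ∏ i, d i + ∑ i, u i * v i * ∏ j ∈ univ.erase i, d j := by
  rw [det_add_vecMulVec, det_diagonal, adjugate_diagonal]
  simp only [dotProduct, mulVec_diagonal]
  congr 1
  exact sum_congr rfl fun i _ => by ring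

end Matrix

/-- determinant identity for H_{ij} = (A + 2λᵢδ_{ij})/((1+λᵢ²)(1+λⱼ²)). -/
theorem det_exponentiation_matrix
    (n : ℕ) (hn : 1 ≤ n) (lam : Fin n → ℝ) (A : ℝ) :
    Matrix.det (Matrix.of fun i j : Fin n =>
        (A + 2 * lam i * (if i = j then (1 : ℝ) else 0)) /
          ((1 + lam i ^ 2) * (1 + lam j ^ 2))) =
      (A * 2 ^ (n - 1) * esymm n (n - 1) lam + 2 ^ n * esymm n n lam) /
        ∏ i, (1 + lam i ^ 2) ^ 2 := by
  set c : Fin n → ℝ := fun i => (1 + lam i ^ 2)⁻¹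
  have hfactor : (Matrix.of fun i j : Fin n =>
        (A + 2 * lam i * (if i = j then (1 : ℝ) else 0)) / ((1 + lam i ^ 2) * (1 + lam j ^ 2))) =
      diagonal c * (diagonal (fun i => 2 * lam i) + vecMulVec (fun _ => A) 1) * diagonal c := by
    ext i j
    by_cases h : i = j <;> simp [c, h, div_eq_mul_inv] <;> ring
  have hP : ∏ i, (1 + lam i ^ 2) ≠ 0 := prod_ne_zero_iff.mpr fun i _ => by positivity
  rw [hfactor, det_mul, det_mul, det_diagonal, det_diagonal_add_vecMulVec, esymm_self,
    esymm_sub_one hn, prod_pow, prod_inv_distrib]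
  simp only [prod_mul_distrib, prod_const, card_univ,
    card_erase_of_mem (mem_univ _), Fintype.card_fin, Pi.one_apply, mul_one, ← mul_sum]
  field_simp
  ring
end
end

section
/- Let n ≥ 3 be an integer and K > 0. Let λ₁ ≥ λ₂ ≥ … ≥ λₙ be real numbers with λ_j ≤ K for all j, λₙ < 0, and Σ_{j=1}^n arctan λ_j ≥ (n−2)π/2. Then λ_{n−1} > tan(T), where T = π/2 − arctan(K). -/
/-!
Every `arctan λⱼ` is at most `arctan K`, so the hypothesis on the sum forces
`arctan λₙ₋₁ + arctan λₙ ≥ (n - 2)(π/2 - arctan K) = (n - 2) T`.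
As `arctan λₙ < 0` and `T > 0`, this gives `arctan λₙ₋₁ > (n - 2) T ≥ T`, and applying `tan` on
`[0, π/2)` concludes.
-/

open Real Finset

theorem Finset.sum_le_add_add_card_sub_two_nsmul {ι M : Type*} [DecidableEq ι]
    [AddCommGroup M] [PartialOrder M] [IsOrderedAddMonoid M]
    {s : Finset ι} {f : ι → M} {c : M} {a b : ι} (ha : a ∈ s) (hb : b ∈ s) (hab : a ≠ b)
    (hf : ∀ i ∈ s, f i ≤ c) :
    ∑ i ∈ s, f i ≤ f a + f b + (#s - 2) • c := by
  have hpair : {a, b} ⊆ s := insert_subset ha (singleton_subset_iff.2 hb)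
  have hgap : ∑ i ∈ {a, b}, (c - f i) ≤ ∑ i ∈ s, (c - f i) :=
    sum_le_sum_of_subset_of_nonneg hpair fun i hi _ => sub_nonneg.2 (hf i hi)
  have hcard : #s = #s - 2 + 2 := (Nat.sub_add_cancel (card_pair hab ▸ card_le_card hpair)).symm
  rw [sum_pair hab, sum_sub_distrib, sum_const, hcard, add_nsmul, two_nsmul] at hgap
  rw [← sub_nonneg] at hgap ⊢
  convert hgap using 1
  abel

theorem Real.tan_lt_of_lt_arctan {T x : ℝ} (hT : 0 ≤ T) (h : T < arctan x) : tan T < x := by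
  simpa only [tan_arctan] using tan_lt_tan_of_nonneg_of_lt_pi_div_two hT (arctan_lt_pi_div_two x) h

/-- Indices are 0-based: `lam i` is λ_{i+1}, so `lam ⟨n - 2, _⟩` is λₙ₋₁. -/
theorem second_smallest_eigenvalue_lower_bound
    (n : ℕ) (hn : 3 ≤ n) (K : ℝ) (lam : Fin n → ℝ)
    (hbd : ∀ j, lam j ≤ K)
    (hneg : lam ⟨n - 1, by omega⟩ < 0)
    (hθ : ((n : ℝ) - 2) * Real.pi / 2 ≤ ∑ j, Real.arctan (lam j)) :
    Real.tan (Real.pi / 2 - Real.arctan K) < lam ⟨n - 2, by omega⟩ := by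
  set T := π / 2 - arctan K with hT_def
  have hT : 0 < T := sub_pos.2 (arctan_lt_pi_div_two K)
  have hsum := sum_le_add_add_card_sub_two_nsmul (f := fun j => arctan (lam j)) (c := arctan K)
    (mem_univ (⟨n - 2, by omega⟩ : Fin n)) (mem_univ (⟨n - 1, by omega⟩ : Fin n))
    (by simp only [ne_eq, Fin.mk.injEq]; omega) fun j _ => arctan_mono (hbd j)
  rw [card_univ, Fintype.card_fin, nsmul_eq_mul, Nat.cast_sub (by omega), Nat.cast_ofNat] at hsum
  have hlast : arctan (lam ⟨n - 1, by omega⟩) < 0 := arctan_lt_zero.2 hneg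
  have hn' : (3 : ℝ) ≤ n := by exact_mod_cast hn
  refine tan_lt_of_lt_arctan hT.le ?_
  nlinarith [mul_nonneg (by linarith : (0 : ℝ) ≤ n - 3) hT.le]
end

section
/- Let n ≥ 3 and let λ₁,…,λₙ be real numbers with Σ_{j=1}^n arctan λ_j ≥ (n−2)π/2. Then max_{1≤j≤n} λ_j ≥ tan( π/2 − π/n ), and consequently log sqrt( 1 + (max_{1≤j≤n} λ_j)² ) ≥ (1/2)·log(4/3). -/
/-!
Since `arctan` is increasing, `∑ arctan λⱼ ≤ n · arctan λ_max`, so the phase condition forces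
`arctan λ_max ≥ π/2 - π/n`; apply `tan`. For `n ≥ 3` this angle is at least `π/6`, whence
`λ_max ≥ tan (π/6) = 1/√3` and `1 + λ_max² ≥ 4/3`.
-/

open Real Set

namespace Real

lemma tan_le_iff_le_arctan {x y : ℝ} (hx : x ∈ Ioo (-(π / 2)) (π / 2)) :
    tan x ≤ y ↔ x ≤ arctan y := by
  rw [← arctan_le_arctan_iff, arctan_tan hx.1 hx.2]

lemma le_tan_iff_arctan_le {x y : ℝ} (hx : x ∈ Ioo (-(π / 2)) (π / 2)) :
    y ≤ tan x ↔ arctan y ≤ x := by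
  rw [← arctan_le_arctan_iff, arctan_tan hx.1 hx.2]

lemma pi_div_two_sub_pi_div_mem_Ioo {n : ℕ} (hn : 1 < n) :
    π / 2 - π / n ∈ Ioo (-(π / 2)) (π / 2) := by
  have hn' : (1 : ℝ) < n := by exact_mod_cast hn
  have h0 : 0 < π / n := div_pos pi_pos (by linarith)
  have h1 : π / n < π := div_lt_self pi_pos hn'
  constructor <;> linarith

lemma inv_sqrt_three_le_tan_pi_div_two_sub_pi_div {n : ℕ} (hn : 3 ≤ n) :
    (√3)⁻¹ ≤ tan (π / 2 - π / n) := by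
  rw [le_tan_iff_arctan_le (pi_div_two_sub_pi_div_mem_Ioo (by omega)), arctan_inv_sqrt_three]
  have : π / n ≤ π / 3 := div_le_div_of_nonneg_left pi_pos.le (by norm_num) (by exact_mod_cast hn)
  linarith

lemma sum_arctan_le_card_mul_arctan_iSup {ι : Type*} [Fintype ι] (f : ι → ℝ) :
    ∑ j, arctan (f j) ≤ Fintype.card ι * arctan (⨆ j, f j) := by
  have hle : ∀ j, f j ≤ ⨆ j, f j := le_ciSup (Set.finite_range f).bddAbove
  calc ∑ j, arctan (f j) ≤ Fintype.card ι • arctan (⨆ j, f j) :=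
        Finset.sum_le_card_nsmul _ _ _ fun j _ ↦ arctan_mono (hle j)
    _ = Fintype.card ι * arctan (⨆ j, f j) := nsmul_eq_mul _ _

lemma pi_div_two_sub_pi_div_card_le_arctan_iSup {ι : Type*} [Fintype ι] [Nonempty ι]
    (f : ι → ℝ) (h : ((Fintype.card ι : ℝ) - 2) * π / 2 ≤ ∑ j, arctan (f j)) :
    π / 2 - π / Fintype.card ι ≤ arctan (⨆ j, f j) := by
  have hcard : (0 : ℝ) < Fintype.card ι := by exact_mod_cast Fintype.card_pos
  calc π / 2 - π / Fintype.card ι = ((Fintype.card ι - 2) * π / 2) / Fintype.card ι := by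
        field_simp
    _ ≤ arctan (⨆ j, f j) := by
        rw [div_le_iff₀ hcard]
        linarith [sum_arctan_le_card_mul_arctan_iSup f]

lemma half_log_four_thirds_le_log_sqrt_one_add_sq {x : ℝ} (hx : (√3)⁻¹ ≤ x) :
    1 / 2 * log (4 / 3) ≤ log √(1 + x ^ 2) := by
  have hsq : 1 / 3 ≤ x ^ 2 := by
    have := pow_le_pow_left₀ (by positivity) hx 2
    rwa [inv_pow, sq_sqrt (by norm_num), ← one_div] at this
  rw [log_sqrt (by positivity)]
  linarith [log_le_log (by norm_num) (by linarith : (4 : ℝ) / 3 ≤ 1 + x ^ 2)]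

end Real

/-- at critical/supercritical phase the largest eigenvalue is at least
tan(π/2 − π/n), hence b = log√(1+λ_max²) ≥ (1/2)log(4/3). -/
theorem largest_eigenvalue_lower_bound
    (n : ℕ) (hn : 3 ≤ n) (lam : Fin n → ℝ)
    (hθ : ((n : ℝ) - 2) * Real.pi / 2 ≤ ∑ j, Real.arctan (lam j)) :
    Real.tan (Real.pi / 2 - Real.pi / n) ≤ ⨆ j, lam j ∧
    (1 / 2) * Real.log (4 / 3) ≤ Real.log (Real.sqrt (1 + (⨆ j, lam j) ^ 2)) := by
  have : Nonempty (Fin n) := ⟨⟨0, by omega⟩⟩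
  have hangle : π / 2 - π / n ≤ arctan (⨆ j, lam j) := by
    simpa using pi_div_two_sub_pi_div_card_le_arctan_iSup lam (by simpa using hθ)
  have hmax : tan (π / 2 - π / n) ≤ ⨆ j, lam j :=
    (tan_le_iff_le_arctan (pi_div_two_sub_pi_div_mem_Ioo (by omega))).2 hangle
  exact ⟨hmax, half_log_four_thirds_le_log_sqrt_one_add_sq
    ((inv_sqrt_three_le_tan_pi_div_two_sub_pi_div hn).trans hmax)⟩
end

section
/- Let n ≥ 1 and let λ₁,…,λₙ be real numbers. Set Θ = Σ_{j=1}^n arctan λ_j and V = ∏_{j=1}^n sqrt(1+λ_j²). Then the following identity holds: ( Σ_{j=1}^n 1/(1+λ_j²) ) · V = cos(Θ) · Σ_{k≥0, 2k<n} (−1)^k (n−2k) σ_{2k}(λ) − sin(Θ) · Σ_{k≥1, 2k−1<n} (−1)^k (n−2k+1) σ_{2k−1}(λ). -/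
/-!
Put `z_j = 1 + i λ_j = √(1 + λ_j²) e^{i arctan λ_j}`, so that `∏ z_j = V e^{iΘ}`. Then
`S := ∑_j ∏_{i ≠ j} z_i = V e^{iΘ} ∑_j z_j⁻¹`, and since `Re z_j⁻¹ = 1 / (1 + λ_j²)` the
left-hand side is `Re (e^{-iΘ} S)`. Expanding the products instead gives
`S = ∑_m (n - m) i^m σ_m`, whose real and imaginary parts are the two alternating sums of the
right-hand side.
-/

open Real

noncomputable section

open Finset
open Complex (I)

namespace Finset

variable {ι : Type*} [DecidableEq ι]

theorem sum_prod_erase_one_add {R : Type*} [CommSemiring R] (s : Finset ι) (x : ι → R) :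
    ∑ j ∈ s, ∏ i ∈ s.erase j, (1 + x i) =
      ∑ t ∈ s.powerset, (#s - #t) • ∏ i ∈ t, x i := by
  calc ∑ j ∈ s, ∏ i ∈ s.erase j, (1 + x i)
      = ∑ j ∈ s, ∑ t ∈ s.powerset, if j ∉ t then ∏ i ∈ t, x i else 0 := by
        refine sum_congr rfl fun j _ => ?_
        rw [prod_one_add, ← sum_filter]
        congr 1
        ext t
        simp [subset_erase]
    _ = ∑ t ∈ s.powerset, (#s - #t) • ∏ i ∈ t, x i := by
        rw [sum_comm]
        refine sum_congr rfl fun t ht => ?_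
        rw [← sum_filter, sum_const, ← sdiff_eq_filter,
          card_sdiff_of_subset (mem_powerset.mp ht)]

theorem sum_prod_erase_eq_prod_mul_sum_inv {K : Type*} [Field K] (s : Finset ι) {f : ι → K}
    (hf : ∀ i ∈ s, f i ≠ 0) :
    ∑ j ∈ s, ∏ i ∈ s.erase j, f i = (∏ i ∈ s, f i) * ∑ j ∈ s, (f j)⁻¹ := by
  rw [mul_sum]
  refine sum_congr rfl fun j hj => ?_
  rw [eq_mul_inv_iff_mul_eq₀ (hf j hj), prod_erase_mul _ _ hj]

theorem sum_range_eq_sum_even_add_sum_odd {M : Type*} [AddCommMonoid M] (f : ℕ → M) (n : ℕ) :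
    ∑ m ∈ range n, f m =
      ∑ k ∈ range ((n + 1) / 2), f (2 * k) + ∑ k ∈ Icc 1 (n / 2), f (2 * k - 1) := by
  induction n with
  | zero => simp
  | succ n ih =>
    rw [sum_range_succ, ih]
    rcases Nat.even_or_odd' n with ⟨p, rfl | rfl⟩
    · have h₁ : (2 * p + 1 + 1) / 2 = p + 1 := by omega
      have h₂ : (2 * p + 1) / 2 = p := by omega
      have h₃ : 2 * p / 2 = p := by omega
      rw [h₁, h₂, h₃, sum_range_succ]
      abel
    · have h₁ : (2 * p + 1 + 1 + 1) / 2 = p + 1 := by omega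
      have h₂ : (2 * p + 1 + 1) / 2 = p + 1 := by omega
      have h₃ : (2 * p + 1) / 2 = p := by omega
      rw [h₁, h₂, h₃, sum_Icc_succ_top (by omega), show 2 * (p + 1) - 1 = 2 * p + 1 by omega]
      abel

end Finset

theorem sum_prod_erase_one_add_ofReal_mul_I_eq_sum_esymm (n : ℕ) (lam : Fin n → ℝ) :
    ∑ j, ∏ i ∈ univ.erase j, (1 + (lam i : ℂ) * I) =
      ∑ m ∈ range n, ((n - m : ℕ) : ℂ) * I ^ m * esymm n m lam := by
  rw [sum_prod_erase_one_add, sum_powerset, card_univ, Fintype.card_fin, sum_range_succ,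
    sum_eq_zero (s := powersetCard n univ) fun t ht => by
      rw [(mem_powersetCard.mp ht).2, Nat.sub_self, zero_smul], add_zero]
  refine sum_congr rfl fun m _ => ?_
  rw [esymm, Complex.ofReal_sum, mul_sum]
  refine sum_congr rfl fun t ht => ?_
  rw [(mem_powersetCard.mp ht).2, prod_mul_distrib, prod_const, (mem_powersetCard.mp ht).2,
    nsmul_eq_mul, Complex.ofReal_prod]
  ring

theorem sum_prod_erase_one_add_ofReal_mul_I_eq_alternating (n : ℕ) (lam : Fin n → ℝ) :
    ∑ j, ∏ i ∈ univ.erase j, (1 + (lam i : ℂ) * I) =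
      ((∑ k ∈ range ((n + 1) / 2),
          (-1 : ℝ) ^ k * ((n : ℝ) - 2 * k) * esymm n (2 * k) lam : ℝ) : ℂ) -
        ((∑ k ∈ Icc 1 (n / 2),
          (-1 : ℝ) ^ k * ((n : ℝ) - 2 * k + 1) * esymm n (2 * k - 1) lam : ℝ) : ℂ) * I := by
  rw [sum_prod_erase_one_add_ofReal_mul_I_eq_sum_esymm, sum_range_eq_sum_even_add_sum_odd,
    sub_eq_add_neg]
  push_cast
  rw [sum_mul, ← sum_neg_distrib]
  congr 1
  · refine sum_congr rfl fun k hk => ?_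
    have h : 2 * k ≤ n := by have := mem_range.mp hk; omega
    rw [Nat.cast_sub h, pow_mul, Complex.I_sq]
    push_cast
    ring
  · refine sum_congr rfl fun k hk => ?_
    obtain ⟨hk₁, hk₂⟩ := mem_Icc.mp hk
    obtain ⟨p, rfl⟩ : ∃ p, k = p + 1 := ⟨k - 1, by omega⟩
    rw [show 2 * (p + 1) - 1 = 2 * p + 1 by omega, Nat.cast_sub (by omega), pow_succ, pow_mul,
      Complex.I_sq]
    push_cast
    ring

theorem one_add_ofReal_mul_I_ne_zero (x : ℝ) : 1 + (x : ℂ) * I ≠ 0 := fun h => by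
  simpa using congrArg Complex.re h

theorem one_add_ofReal_mul_I_eq_sqrt_mul_exp_arctan (x : ℝ) :
    1 + (x : ℂ) * I = (√(1 + x ^ 2) : ℂ) * Complex.exp (arctan x * I) := by
  have hs : (√(1 + x ^ 2) : ℂ) ≠ 0 := by exact_mod_cast (by positivity : √(1 + x ^ 2) ≠ 0)
  rw [Complex.exp_mul_I, ← Complex.ofReal_cos, ← Complex.ofReal_sin, Real.cos_arctan,
    Real.sin_arctan]
  push_cast
  field_simp

theorem re_inv_one_add_ofReal_mul_I (x : ℝ) : (1 + (x : ℂ) * I)⁻¹.re = 1 / (1 + x ^ 2) := by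
  rw [Complex.inv_re, show (1 : ℂ) = (1 : ℝ) by simp, Complex.normSq_add_mul_I]
  simp

/-- The index ranges encode `2k < n` as `k < (n+1)/2`, and `k ≥ 1 ∧ 2k−1 < n` as
`k ∈ Icc 1 (n/2)`. -/
theorem conformality_identity_trace_general
    (n : ℕ) (lam : Fin n → ℝ) :
    (∑ j, 1 / (1 + lam j ^ 2)) * ∏ j, Real.sqrt (1 + lam j ^ 2) =
      Real.cos (∑ j, Real.arctan (lam j)) *
        ∑ k ∈ Finset.range ((n + 1) / 2),
          (-1 : ℝ) ^ k * ((n : ℝ) - 2 * k) * esymm n (2 * k) lam -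
      Real.sin (∑ j, Real.arctan (lam j)) *
        ∑ k ∈ Finset.Icc 1 (n / 2),
          (-1 : ℝ) ^ k * ((n : ℝ) - 2 * k + 1) * esymm n (2 * k - 1) lam := by
  set Θ := ∑ j, arctan (lam j)
  set V := ∏ j, √(1 + lam j ^ 2)
  have polar : ∏ j, (1 + (lam j : ℂ) * I) = V * Complex.exp (Θ * I) := by
    simp_rw [one_add_ofReal_mul_I_eq_sqrt_mul_exp_arctan, prod_mul_distrib, ← Complex.exp_sum,
      ← sum_mul]
    simp only [V, Θ, Complex.ofReal_prod, Complex.ofReal_sum]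
  have rotate : (∑ j, ∏ i ∈ univ.erase j, (1 + (lam i : ℂ) * I)) * Complex.exp (-Θ * I) =
      V * ∑ j, (1 + (lam j : ℂ) * I)⁻¹ := by
    rw [sum_prod_erase_eq_prod_mul_sum_inv _ fun j _ => one_add_ofReal_mul_I_ne_zero (lam j),
      polar, mul_right_comm, mul_assoc (V : ℂ), ← Complex.exp_add, neg_mul, add_neg_cancel,
      Complex.exp_zero, mul_one]
  have lhs : (∑ j, 1 / (1 + lam j ^ 2)) * V =
      ((∑ j, ∏ i ∈ univ.erase j, (1 + (lam i : ℂ) * I)) * Complex.exp (-Θ * I)).re := by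
    rw [rotate, Complex.re_ofReal_mul, Complex.re_sum, mul_comm]
    simp only [re_inv_one_add_ofReal_mul_I]
  rw [lhs, sum_prod_erase_one_add_ofReal_mul_I_eq_alternating, ← Complex.ofReal_neg,
    Complex.exp_mul_I, ← Complex.ofReal_cos, ← Complex.ofReal_sin, Real.cos_neg, Real.sin_neg]
  simp only [Complex.mul_re, Complex.mul_im, Complex.sub_re, Complex.sub_im, Complex.add_re,
    Complex.add_im, Complex.ofReal_re, Complex.ofReal_im, Complex.I_re, Complex.I_im]
  ring

/-- the trace of the conformality identity. Note that for k : ℕ,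
`2k < n ↔ k < (n+1)/2` and `(k ≥ 1 ∧ 2k−1 < n) ↔ k ∈ Icc 1 (n/2)`. -/
theorem conformality_identity_trace
    (n : ℕ) (hn : 1 ≤ n) (lam : Fin n → ℝ) :
    (∑ j, 1 / (1 + lam j ^ 2)) * ∏ j, Real.sqrt (1 + lam j ^ 2) =
      Real.cos (∑ j, Real.arctan (lam j)) *
        ∑ k ∈ Finset.range ((n + 1) / 2),
          (-1 : ℝ) ^ k * ((n : ℝ) - 2 * k) * esymm n (2 * k) lam -
      Real.sin (∑ j, Real.arctan (lam j)) *
        ∑ k ∈ Finset.Icc 1 (n / 2),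
          (-1 : ℝ) ^ k * ((n : ℝ) - 2 * k + 1) * esymm n (2 * k - 1) lam :=
  conformality_identity_trace_general n lam
end
end
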